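/- Let q ≥ 2 and N ≥ t ≥ 0 be integers, let α, β ∈ ℂ^{S_{q,N}}, and set c = ∑_{n∈S_{q,N}} α_n D_n and c′ = ∑_{n∈S_{q,N}} β_n D_n in H_{q,N}. Then for all e, f ∈ S_{q,t}: ⟨E_e c, E_f c′⟩ = ∑_{n∈S_{q,N}} conj(α_n) · β_{n−e+f} · C(N−t; n−e) / √(C(N;n) · C(N; n−e+f)), where summands in which n−e or n−e+f has a negative entry are 0. -/

import Mathlib

/-- The discrete simplex `S_{q,N}`: tuples of naturals of length `q` summing to `N`. -/
def simplex (q N : ℕ) : Finset (Fin q → ℕ) := Finset.Nat.antidiagonalTuple q N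

/-- Multinomial coefficient `C(∑ n; n)` for a tuple of naturals. -/
def multinat {q : ℕ} (n : Fin q → ℕ) : ℕ := Nat.multinomial Finset.univ n

/-- Multinomial coefficient for an integer tuple: `0` if some entry is negative. -/
def multZ {q : ℕ} (n : Fin q → ℤ) : ℕ :=
  if ∀ i, 0 ≤ n i then Nat.multinomial Finset.univ (fun i => (n i).toNat) else 0

/-- The `N`-qudit space `H_{q,N}`: complex-valued functions on strings `Fin N → Fin q`. -/
abbrev Hsp (q N : ℕ) := (Fin N → Fin q) → ℂ

/-- The inner product `⟨u,v⟩ = ∑_x conj (u x) · v x` on `H_{q,N}`. -/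
noncomputable def hinner {q N : ℕ} (u v : Hsp q N) : ℂ :=
  ∑ x : Fin N → Fin q, (starRingEnd ℂ) (u x) * v x

/-- The composition of a string `x : Fin N → Fin q`: `compn x i = #{k : x k = i}`. -/
def compn {q N : ℕ} (x : Fin N → Fin q) : Fin q → ℕ :=
  fun i => (Finset.univ.filter (fun k => x k = i)).card

/-- The Dicke state `D_n = C(N;n)^{-1/2} ∑_{x : comp x = n} δ_x`. -/
noncomputable def dicke {q N : ℕ} (n : Fin q → ℕ) : Hsp q N :=
  fun x => if compn x = n then (((Real.sqrt (multinat n))⁻¹ : ℝ) : ℂ) else 0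

/-- The type-`j` deletion operator at position `i`: `(delAt j i v) y = v (y with j inserted
at position i)`; equivalently `delAt j i δ_x = [x i = j] · δ_{x∼i}`. -/
def delAt {q M : ℕ} (j : Fin q) (i : Fin (M + 1)) (v : Hsp q (M + 1)) : Hsp q M :=
  fun y => v (i.insertNth j y)

/-- The composite deletion operator determined by a word `w : Fin t → Fin q` of deletion
types: the composition of `t` single deletions of types `w 0, w 1, …`, each applied at
position `1`.  For `e ∈ S_{q,t}`, the operator `E_e` is `Edel w` for any word `w` with
composition `e`. -/
def Edel {q : ℕ} : {t : ℕ} → (Fin t → Fin q) → {M : ℕ} → Hsp q (M + t) → Hsp q M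
  | 0, _, _, v => v
  | _ + 1, w, _, v => Edel (fun k => w k.succ) (delAt (w 0) 0 v)

/-- The coefficient `C(N−t; n−e) / √(C(N;n)·C(N; n−e+f))` appearing in the error-correction
conditions; it vanishes when `n − e` has a negative entry. -/
noncomputable def klCoeff {q : ℕ} (n e f : Fin q → ℕ) : ℝ :=
  (multZ (fun i => (n i : ℤ) - (e i : ℤ)) : ℝ) /
    Real.sqrt ((multinat n : ℝ) * (multinat (fun i => n i - e i + f i) : ℝ))

/-! ### Auxiliary lemmas -/

lemma compn_eq_sum {q N : ℕ} (x : Fin N → Fin q) (i : Fin q) :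
    compn x i = ∑ k, if x k = i then 1 else 0 := by
  rw [compn, Finset.card_filter]

lemma sum_compn {q N : ℕ} (x : Fin N → Fin q) : ∑ i, compn x i = N := by
  simp only [compn_eq_sum]
  rw [Finset.sum_comm]
  simp

lemma compn_cons {q M : ℕ} (a : Fin q) (z : Fin M → Fin q) :
    compn (Fin.cons a z) = fun j => (if a = j then 1 else 0) + compn z j := by
  funext j
  simp only [compn_eq_sum, Fin.sum_univ_succ, Fin.cons_zero, Fin.cons_succ]

lemma multinat_update {q M : ℕ} (m : Fin q → ℕ) (i : Fin q) (hi : 1 ≤ m i)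
    (hs : ∑ j, m j = M + 1) :
    multinat m * m i = (M + 1) * multinat (Function.update m i (m i - 1)) := by
  set m' := Function.update m i (m i - 1) with hm'
  have hmem : i ∈ (Finset.univ : Finset (Fin q)) := Finset.mem_univ i
  have herase : ∑ j, m j = m i + ∑ j ∈ Finset.univ.erase i, m j := by
    rw [← Finset.sum_erase_add _ _ hmem]; ring
  have hsum' : ∑ j, m' j = M := by
    rw [hm', Finset.sum_update_of_mem hmem, ← Finset.erase_eq]
    omega
  have hprod : ∏ j, Nat.factorial (m j) = m i * ∏ j, Nat.factorial (m' j) := by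
    rw [← Finset.prod_erase_mul _ _ hmem,
      ← Finset.prod_erase_mul _ (fun j => Nat.factorial (m' j)) hmem]
    have h1 : ∏ j ∈ Finset.univ.erase i, Nat.factorial (m j)
        = ∏ j ∈ Finset.univ.erase i, Nat.factorial (m' j) := by
      apply Finset.prod_congr rfl
      intro j hj
      rw [hm', Function.update_of_ne (Finset.mem_erase.1 hj).1]
    have h2 : Nat.factorial (m i) = m i * Nat.factorial (m i - 1) := by
      conv_lhs => rw [show m i = (m i - 1) + 1 by omega]
      rw [Nat.factorial_succ]
      congr 1
      omega
    rw [h1, hm', Function.update_self, h2]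
    ring
  have spec1 := Nat.multinomial_spec (Finset.univ : Finset (Fin q)) m
  have spec2 := Nat.multinomial_spec (Finset.univ : Finset (Fin q)) m'
  rw [hs] at spec1
  rw [hsum'] at spec2
  have key : (m i * ∏ j, Nat.factorial (m' j)) * multinat m
      = (M + 1) * ((∏ j, Nat.factorial (m' j)) * multinat m') := by
    rw [← hprod]
    show (∏ j, Nat.factorial (m j)) * Nat.multinomial Finset.univ m
      = (M + 1) * ((∏ j, Nat.factorial (m' j)) * Nat.multinomial Finset.univ m')
    rw [spec1, spec2, Nat.factorial_succ]
  have hpos : 0 < ∏ j, Nat.factorial (m' j) := Finset.prod_pos fun j _ => Nat.factorial_pos _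
  apply Nat.eq_of_mul_eq_mul_left hpos
  calc (∏ j, Nat.factorial (m' j)) * (multinat m * m i)
      = (m i * ∏ j, Nat.factorial (m' j)) * multinat m := by ring
    _ = (M + 1) * ((∏ j, Nat.factorial (m' j)) * multinat m') := key
    _ = (∏ j, Nat.factorial (m' j)) * ((M + 1) * multinat m') := by ring

lemma multinat_rec {q M : ℕ} (m : Fin q → ℕ) (hs : ∑ j, m j = M + 1) :
    ∑ a, (if 1 ≤ m a then multinat (Function.update m a (m a - 1)) else 0) = multinat m := by
  apply Nat.eq_of_mul_eq_mul_left (Nat.succ_pos M)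
  rw [Finset.mul_sum]
  have h1 : ∀ a : Fin q, (M + 1) * (if 1 ≤ m a then multinat (Function.update m a (m a - 1))
      else 0) = multinat m * m a := by
    intro a
    by_cases h : 1 ≤ m a
    · rw [if_pos h, ← multinat_update m a h hs]
    · rw [if_neg h]
      have : m a = 0 := by omega
      simp [this]
  calc ∑ a, (M + 1) * (if 1 ≤ m a then multinat (Function.update m a (m a - 1)) else 0)
      = ∑ a, multinat m * m a := Finset.sum_congr rfl (fun a _ => h1 a)
    _ = multinat m * ∑ a, m a := by rw [Finset.mul_sum]
    _ = (M + 1) * multinat m := by rw [hs]; ring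

/-- The number of strings with composition `m` is the multinomial coefficient. -/
lemma card_fiber {q : ℕ} : ∀ (M : ℕ) (m : Fin q → ℕ), ∑ j, m j = M →
    (Finset.univ.filter (fun y : Fin M → Fin q => compn y = m)).card = multinat m := by
  intro M
  induction M with
  | zero =>
    intro m hm
    have hm0 : ∀ j, m j = 0 := by
      intro j
      have := Finset.sum_eq_zero_iff.1 hm
      exact this j (Finset.mem_univ j)
    have h1 : ∀ y : Fin 0 → Fin q, compn y = m := by
      intro y
      funext j
      rw [hm0 j, compn]
      simp
    rw [Finset.filter_true_of_mem (fun y _ => h1 y)]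
    have h2 : multinat m = 1 := by
      have spec := Nat.multinomial_spec (Finset.univ : Finset (Fin q)) m
      have hp : ∏ j, Nat.factorial (m j) = 1 := by
        apply Finset.prod_eq_one
        intro j _
        rw [hm0 j]
        rfl
      rw [hm, hp, one_mul] at spec
      simpa [multinat] using spec
    rw [h2]
    simp [Finset.card_univ]
  | succ M ih =>
    intro m hm
    rw [Finset.card_filter]
    rw [← Fintype.sum_equiv (Fin.consEquiv (fun _ => Fin q))
      (fun p => if compn (Fin.cons p.1 p.2) = m then 1 else 0)
      (fun y => if compn y = m then 1 else 0) (fun p => rfl)]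
    rw [Fintype.sum_prod_type]
    have key : ∀ a : Fin q, ∀ z : Fin M → Fin q,
        (compn (Fin.cons a z) = m) ↔ (1 ≤ m a ∧ compn z = Function.update m a (m a - 1)) := by
      intro a z
      constructor
      · intro h
        have ha := congrFun h a
        simp [compn_cons] at ha
        constructor
        · omega
        · funext j
          by_cases hj : j = a
          · subst hj
            rw [Function.update_self]
            omega
          · rw [Function.update_of_ne hj]
            have hb := congrFun h j
            simp only [compn_cons, if_neg (Ne.symm hj), zero_add] at hb
            exact hb
      · rintro ⟨h1, h2⟩
        funext j
        simp only [compn_cons]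
        by_cases hj : a = j
        · subst hj
          rw [if_pos rfl, congrFun h2 a, Function.update_self]
          omega
        · rw [if_neg hj, congrFun h2 j, Function.update_of_ne (Ne.symm hj), zero_add]
    have inner : ∀ a : Fin q, (∑ z : Fin M → Fin q, if compn (Fin.cons a z) = m then 1 else 0)
        = if 1 ≤ m a then multinat (Function.update m a (m a - 1)) else 0 := by
      intro a
      by_cases h : 1 ≤ m a
      · rw [if_pos h]
        rw [← ih (Function.update m a (m a - 1))]
        · rw [Finset.card_filter]
          apply Finset.sum_congr rfl
          intro z _
          congr 1
          rw [eq_iff_iff, key a z]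
          simp [h]
        · rw [Finset.sum_update_of_mem (Finset.mem_univ a), ← Finset.erase_eq]
          have herase : ∑ j, m j = m a + ∑ j ∈ Finset.univ.erase a, m j := by
            rw [← Finset.sum_erase_add _ _ (Finset.mem_univ a)]; ring
          omega
      · rw [if_neg h]
        apply Finset.sum_eq_zero
        intro z _
        rw [if_neg]
        rw [key a z]
        tauto
    rw [Finset.sum_congr rfl (fun a _ => inner a)]
    exact multinat_rec m hm

/-- The string obtained by prepending the reversal of `w` to `y`; `Edel w v y = v (capp w y)`. -/
def capp {q : ℕ} : {t : ℕ} → (Fin t → Fin q) → {M : ℕ} → (Fin M → Fin q) → Fin (M + t) → Fin q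
  | 0, _, _, y => y
  | _ + 1, w, _, y => (0 : Fin (_ + 1)).insertNth (w 0) (capp (fun k => w k.succ) y)

lemma Edel_apply {q : ℕ} : ∀ {t : ℕ} (w : Fin t → Fin q) {M : ℕ} (v : Hsp q (M + t))
    (y : Fin M → Fin q), Edel w v y = v (capp w y)
  | 0, w, M, v, y => rfl
  | t + 1, w, M, v, y => by
    show Edel (fun k => w k.succ) (delAt (w 0) 0 v) y = _
    rw [Edel_apply (fun k => w k.succ) (delAt (w 0) 0 v) y]
    rfl

lemma compn_tail {q t : ℕ} (w : Fin (t + 1) → Fin q) (j : Fin q) :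
    compn w j = (if w 0 = j then 1 else 0) + compn (fun k => w k.succ) j := by
  conv_lhs => rw [← Fin.cons_self_tail w]
  rw [compn_cons]
  rfl

lemma compn_capp {q : ℕ} : ∀ {t : ℕ} (w : Fin t → Fin q) {M : ℕ} (y : Fin M → Fin q),
    compn (capp w y) = fun j => compn w j + compn y j
  | 0, w, M, y => by
    funext j
    have : compn w j = 0 := by simp [compn]
    show compn y j = compn w j + compn y j
    rw [this, zero_add]
  | t + 1, w, M, y => by
    show compn ((0 : Fin (M + t + 1)).insertNth (w 0) (capp (fun k => w k.succ) y)) = _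
    rw [Fin.insertNth_zero', compn_cons, compn_capp (fun k => w k.succ) y]
    funext j
    rw [compn_tail w j]
    show (if w 0 = j then 1 else 0) + (compn (fun k => w k.succ) j + compn y j) = _
    ring

lemma mem_simplex_iff {q K : ℕ} (n : Fin q → ℕ) : n ∈ simplex q K ↔ ∑ i, n i = K :=
  Finset.Nat.mem_antidiagonalTuple

lemma code_apply {q N : ℕ} (γ : (Fin q → ℕ) → ℂ) (x : Fin N → Fin q) :
    (∑ n ∈ simplex q N, γ n • dicke (N := N) n) x
      = γ (compn x) * (((Real.sqrt (multinat (compn x)))⁻¹ : ℝ) : ℂ) := by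
  rw [Finset.sum_apply]
  rw [Finset.sum_eq_single_of_mem (compn x) ((mem_simplex_iff (compn x)).2 (sum_compn x))]
  · simp [dicke]
  · intro n _ hne
    simp [dicke, Ne.symm hne]

/-- The summand appearing after grouping strings by composition. -/
noncomputable def Gaux {q : ℕ} (α β : (Fin q → ℕ) → ℂ) (e f : Fin q → ℕ)
    (m : Fin q → ℕ) : ℂ :=
  (starRingEnd ℂ) (α (fun j => e j + m j)) * β (fun j => f j + m j) *
    ((((Real.sqrt (multinat (fun j => e j + m j)))⁻¹
      * (Real.sqrt (multinat (fun j => f j + m j)))⁻¹ : ℝ)) : ℂ)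

/-- for `c = ∑_{n ∈ S_{q,N}} α_n D_n`, `c' = ∑_{n ∈ S_{q,N}} β_n D_n` with
`N = M + t ≥ t` and `e, f ∈ S_{q,t}`,
`⟨E_e c, E_f c'⟩ = ∑_{n ∈ S_{q,N}} conj(α_n) β_{n−e+f} C(N−t; n−e)/√(C(N;n) C(N;n−e+f))`,
where summands in which `n − e` (hence `n − e + f`) has a negative entry vanish. -/
theorem inner_product_of_deleted_codewords (q M t : ℕ) (hq : 2 ≤ q)
    (α β : (Fin q → ℕ) → ℂ)
    (e f : Fin q → ℕ) (he : ∑ i, e i = t) (hf : ∑ i, f i = t)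
    (we wf : Fin t → Fin q) (hwe : compn we = e) (hwf : compn wf = f) :
    hinner (Edel we (∑ n ∈ simplex q (M + t), α n • dicke (N := M + t) n))
           (Edel wf (∑ n ∈ simplex q (M + t), β n • dicke (N := M + t) n)) =
      ∑ n ∈ simplex q (M + t),
        (starRingEnd ℂ) (α n) * β (fun i => n i - e i + f i) * ((klCoeff n e f : ℝ) : ℂ) := by
  classical
  -- Step 1: rewrite the inner product as a sum over strings of length M
  have step1 : hinner (Edel we (∑ n ∈ simplex q (M + t), α n • dicke (N := M + t) n))
      (Edel wf (∑ n ∈ simplex q (M + t), β n • dicke (N := M + t) n))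
      = ∑ y : Fin M → Fin q, Gaux α β e f (compn y) := by
    rw [hinner]
    apply Finset.sum_congr rfl
    intro y _
    rw [Edel_apply, Edel_apply, code_apply, code_apply]
    have h1 : compn (capp we y) = fun j => e j + compn y j := by
      rw [compn_capp, hwe]
    have h2 : compn (capp wf y) = fun j => f j + compn y j := by
      rw [compn_capp, hwf]
    rw [h1, h2, map_mul, Complex.conj_ofReal, Gaux]
    push_cast
    ring
  -- Step 2: group strings by composition
  have step2 : (∑ y : Fin M → Fin q, Gaux α β e f (compn y))
      = ∑ m ∈ simplex q M, (multinat m : ℂ) * Gaux α β e f m := by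
    rw [← Finset.sum_fiberwise_of_maps_to
      (fun y _ => (mem_simplex_iff (compn y)).2 (sum_compn y))
      (fun y => Gaux α β e f (compn y))]
    apply Finset.sum_congr rfl
    intro m hm
    have hcongr : ∀ y ∈ Finset.univ.filter (fun y : Fin M → Fin q => compn y = m),
        Gaux α β e f (compn y) = Gaux α β e f m := by
      intro y hy
      rw [(Finset.mem_filter.1 hy).2]
    rw [Finset.sum_congr rfl hcongr, Finset.sum_const,
      card_fiber M m ((mem_simplex_iff m).1 hm), nsmul_eq_mul]
  rw [step1, step2]
  -- Step 3: reindex the right-hand side via m ↦ e + m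
  have hsub : (simplex q M).image (fun m j => e j + m j) ⊆ simplex q (M + t) := by
    intro n hn
    obtain ⟨m, hm, rfl⟩ := Finset.mem_image.1 hn
    rw [mem_simplex_iff]
    rw [Finset.sum_add_distrib, he, (mem_simplex_iff m).1 hm]
    omega
  have hvanish : ∀ n ∈ simplex q (M + t), n ∉ (simplex q M).image (fun m j => e j + m j) →
      (starRingEnd ℂ) (α n) * β (fun i => n i - e i + f i) * ((klCoeff n e f : ℝ) : ℂ) = 0 := by
    intro n hn hni
    have hneg : ¬ ∀ i, 0 ≤ (n i : ℤ) - (e i : ℤ) := by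
      intro hall
      apply hni
      refine Finset.mem_image.2 ⟨fun i => n i - e i, ?_, ?_⟩
      · rw [mem_simplex_iff]
        have h2 : ∑ i, (n i - e i) + ∑ i, e i = ∑ i, n i := by
          rw [← Finset.sum_add_distrib]
          apply Finset.sum_congr rfl
          intro i _
          have := hall i
          omega
        have h3 := (mem_simplex_iff n).1 hn
        omega
      · funext j
        have := hall j
        show e j + (n j - e j) = n j
        omega
    have h0 : multZ (fun i => (n i : ℤ) - (e i : ℤ)) = 0 := by
      rw [multZ, if_neg hneg]
    have hkl0 : klCoeff n e f = 0 := by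
      rw [klCoeff, h0]
      simp
    rw [hkl0]
    simp
  rw [← Finset.sum_subset hsub hvanish]
  rw [Finset.sum_image (fun m1 _ m2 _ h => by
    funext j
    have := congrFun h j
    omega)]
  -- Step 4: termwise identification
  apply Finset.sum_congr rfl
  intro m hm
  have hBm : (fun i => (fun m j => e j + m j) m i - e i + f i) = fun j => f j + m j := by
    funext i
    simp only
    omega
  have hnum : multZ (fun i => (((fun m j => e j + m j) m i : ℕ) : ℤ) - (e i : ℤ))
      = multinat m := by
    rw [multZ, if_pos]
    · unfold multinat
      congr 1
      funext i
      simp only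
      omega
    · intro i
      simp only
      omega
  have hkl : klCoeff ((fun m j => e j + m j) m) e f
      = (multinat m : ℝ) * ((Real.sqrt (multinat (fun j => e j + m j)))⁻¹
        * (Real.sqrt (multinat (fun j => f j + m j)))⁻¹) := by
    rw [klCoeff, hnum]
    have hden : ((multinat ((fun m j => e j + m j) m) : ℝ) *
        (multinat (fun i => (fun m j => e j + m j) m i - e i + f i) : ℝ))
        = (multinat (fun j => e j + m j) : ℝ) * (multinat (fun j => f j + m j) : ℝ) := by
      rw [hBm]
    rw [hden, Real.sqrt_mul (Nat.cast_nonneg _), div_eq_mul_inv, mul_inv]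
  rw [hBm, hkl, Gaux]
  push_cast
  ring
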